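/- arXiv:1611.09525 — 4 statements merged into one kernel-verified Lean document; each statement's English description precedes it below -/
import Mathlib

section
/- If G is a triangle-free finite simple graph on n vertices, then for every x, σ(Ḡ, −x²) = (−x)^n · m(G, x), where Ḡ is the complement of G and m(G, x) is the matching polynomial of G. -/
/-- `sigmaCoeff G i` is the number of `i`-colour partitions of `G`, i.e. the number of
partitions of the vertex set of `G` into `i` nonempty independent sets. -/
noncomputable def sigmaCoeff {V : Type} [Fintype V] [DecidableEq V]
    (G : SimpleGraph V) (i : ℕ) : ℕ :=
  Nat.card {F : Finset (Finset V) // F.card = i ∧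
    (∀ p ∈ F, p.Nonempty) ∧
    (∀ p ∈ F, ∀ q ∈ F, p ≠ q → Disjoint p q) ∧
    F.sup id = Finset.univ ∧
    (∀ p ∈ F, ∀ u ∈ p, ∀ v ∈ p, ¬ G.Adj u v)}

/-- The σ-polynomial of `G`, evaluated at `x` : `σ(G,x) = Σ_{i=0}^{n} a_i(G) x^i`. -/
noncomputable def sigmaPoly {V : Type} [Fintype V] [DecidableEq V]
    (G : SimpleGraph V) (x : ℝ) : ℝ :=
  ∑ i ∈ Finset.range (Fintype.card V + 1), (sigmaCoeff G i : ℝ) * x ^ i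

/-- `matchCount G i` is the number of matchings of size `i` in `G`, i.e. the number of
sets of `i` pairwise disjoint edges of `G`. -/
noncomputable def matchCount {V : Type} [Fintype V] [DecidableEq V]
    (G : SimpleGraph V) (i : ℕ) : ℕ :=
  Nat.card {M : Finset (Sym2 V) // M.card = i ∧
    (∀ e ∈ M, e ∈ G.edgeSet) ∧
    (∀ e ∈ M, ∀ f ∈ M, e ≠ f → ∀ v : V, v ∈ e → v ∉ f)}

/-- The matching polynomial of `G`, evaluated at `x` :
`m(G,x) = Σ_{i ≥ 0} (−1)^i m_i(G) x^{n−2i}`. -/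
noncomputable def matchPoly {V : Type} [Fintype V] [DecidableEq V]
    (G : SimpleGraph V) (x : ℝ) : ℝ :=
  ∑ i ∈ Finset.range (Fintype.card V / 2 + 1),
    (-1 : ℝ) ^ i * (matchCount G i : ℝ) * x ^ (Fintype.card V - 2 * i)

/-!
In a triangle-free graph `G` every clique has at most two vertices, so a colour partition of
`Gᶜ` (a partition of the vertices into cliques of `G`) consists of singletons and edges of `G`.
Its edges form a matching, and conversely a matching `M` together with the singletons of the
uncovered vertices is such a partition, with `n - |M|` parts. Hence `a_i(Gᶜ) = m_{n-i}(G)`, and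
`σ(Gᶜ, -x²) = ∑ⱼ m_j(G) (-x²)^(n-j) = (-x)^n ∑ⱼ (-1)^j m_j(G) x^(n-2j)`.
-/

open Finset SimpleGraph

lemma Sym2.toFinset_injective {α : Type*} [DecidableEq α] :
    Function.Injective (Sym2.toFinset : Sym2 α → Finset α) := fun p q h =>
  Sym2.ext fun x => by rw [← Sym2.mem_toFinset, h, Sym2.mem_toFinset]

lemma Sym2.exists_toFinset_eq_of_card_eq_two {α : Type*} [DecidableEq α] {s : Finset α}
    (hs : s.card = 2) : ∃ e : Sym2 α, ¬ e.IsDiag ∧ e.toFinset = s := by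
  obtain ⟨a, b, hab, rfl⟩ := card_eq_two.mp hs
  exact ⟨s(a, b), Sym2.mk_isDiag_iff.not.mpr hab, Sym2.toFinset_mk_eq⟩

namespace SimpleGraph

variable {V : Type*} {G : SimpleGraph V}

lemma IsClique.card_le_two_of_cliqueFree_three (hG : G.CliqueFree 3) {s : Finset V}
    (hs : G.IsClique (s : Set V)) : s.card ≤ 2 := by
  by_contra! h
  obtain ⟨t, hts, ht⟩ := exists_subset_card_eq (show 3 ≤ s.card by omega)
  exact hG t ⟨hs.subset (by simpa using hts), ht⟩

lemma forall_mem_not_adj_iff_isIndepSet {s : Finset V} :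
    (∀ u ∈ s, ∀ v ∈ s, ¬ G.Adj u v) ↔ G.IsIndepSet (s : Set V) :=
  ⟨fun h _ hu _ hv _ => h _ hu _ hv, fun h _ hu _ hv huv =>
    h hu hv (G.ne_of_adj huv) huv⟩

variable [DecidableEq V]

lemma card_toFinset_of_mem_edgeSet {e : Sym2 V} (he : e ∈ G.edgeSet) : e.toFinset.card = 2 :=
  Sym2.card_toFinset_of_not_isDiag e (G.not_isDiag_of_mem_edgeSet he)

lemma isClique_toFinset_iff {e : Sym2 V} (he : ¬ e.IsDiag) :
    G.IsClique (e.toFinset : Set V) ↔ e ∈ G.edgeSet := by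
  induction e using Sym2.ind with
  | _ a b =>
    have hab : a ≠ b := Sym2.mk_isDiag_iff.not.mp he
    simp [Sym2.toFinset_mk_eq, hab]

end SimpleGraph

section Matchings

variable {V : Type*} {G : SimpleGraph V}

/-- `matchCount G i` is definitionally the number of `M` with
`M.card = i ∧ IsMatchingSet G M`. -/
def IsMatchingSet (G : SimpleGraph V) (M : Finset (Sym2 V)) : Prop :=
  (∀ e ∈ M, e ∈ G.edgeSet) ∧ (∀ e ∈ M, ∀ f ∈ M, e ≠ f → ∀ v : V, v ∈ e → v ∉ f)

variable [DecidableEq V] {M : Finset (Sym2 V)}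

lemma disjoint_toFinset_singleton {e : Sym2 V} {v : V} (he : e ∈ M)
    (hv : v ∉ M.biUnion Sym2.toFinset) : Disjoint e.toFinset {v} :=
  disjoint_singleton_right.mpr fun hve => hv (mem_biUnion.mpr ⟨e, he, hve⟩)

lemma IsMatchingSet.disjoint_toFinset (hM : IsMatchingSet G M) {e f : Sym2 V} (he : e ∈ M)
    (hf : f ∈ M) (hef : e ≠ f) : Disjoint e.toFinset f.toFinset :=
  disjoint_left.mpr fun v hve hvf =>
    hM.2 e he f hf hef v (Sym2.mem_toFinset.mp hve) (Sym2.mem_toFinset.mp hvf)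

lemma IsMatchingSet.card_biUnion_toFinset (hM : IsMatchingSet G M) :
    (M.biUnion Sym2.toFinset).card = 2 * M.card := by
  rw [card_biUnion fun e he f hf hef => hM.disjoint_toFinset he hf hef,
    sum_congr rfl fun e he => card_toFinset_of_mem_edgeSet (hM.1 e he), sum_const, smul_eq_mul,
    mul_comm]

variable [Fintype V]

lemma IsMatchingSet.two_mul_card_le (hM : IsMatchingSet G M) : 2 * M.card ≤ Fintype.card V :=
  hM.card_biUnion_toFinset ▸ card_le_univ _

end Matchings

section ColourPartitions

variable {V : Type*} [Fintype V] [DecidableEq V] {G : SimpleGraph V}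

/-- `sigmaCoeff G i` is definitionally the number of `F` with
`F.card = i ∧ IsColourPartition G F`. -/
def IsColourPartition (G : SimpleGraph V) (F : Finset (Finset V)) : Prop :=
  (∀ p ∈ F, p.Nonempty) ∧ (∀ p ∈ F, ∀ q ∈ F, p ≠ q → Disjoint p q) ∧ F.sup id = univ ∧
    (∀ p ∈ F, ∀ u ∈ p, ∀ v ∈ p, ¬ G.Adj u v)

lemma IsColourPartition.isClique_of_compl {F : Finset (Finset V)} (hF : IsColourPartition Gᶜ F)
    {p : Finset V} (hp : p ∈ F) : G.IsClique (p : Set V) :=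
  (isIndepSet_compl G).mp (forall_mem_not_adj_iff_isIndepSet.mp (hF.2.2.2 p hp))

lemma IsColourPartition.exists_mem {F : Finset (Finset V)} (hF : IsColourPartition G F) (v : V) :
    ∃ p ∈ F, v ∈ p := by
  simpa using mem_sup.mp (hF.2.2.1 ▸ mem_univ v : v ∈ F.sup id)

def matchingPartition (M : Finset (Sym2 V)) : Finset (Finset V) :=
  M.image Sym2.toFinset ∪ (univ \ M.biUnion Sym2.toFinset).image singleton

def partitionPairs (F : Finset (Finset V)) : Finset (Sym2 V) :=
  {e | ¬ e.IsDiag ∧ e.toFinset ∈ F}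

variable {M : Finset (Sym2 V)} {F : Finset (Finset V)}

lemma mem_matchingPartition {p : Finset V} :
    p ∈ matchingPartition M ↔
      (∃ e ∈ M, e.toFinset = p) ∨ ∃ v, v ∉ M.biUnion Sym2.toFinset ∧ {v} = p := by
  simp [matchingPartition]

lemma mem_partitionPairs {e : Sym2 V} : e ∈ partitionPairs F ↔ ¬ e.IsDiag ∧ e.toFinset ∈ F := by
  simp [partitionPairs]

lemma IsMatchingSet.card_matchingPartition (hM : IsMatchingSet G M) :
    (matchingPartition M).card = Fintype.card V - M.card := by
  have hdisj : Disjoint (M.image Sym2.toFinset)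
      ((univ \ M.biUnion Sym2.toFinset).image singleton) := by
    refine disjoint_left.mpr fun p hp hp' => ?_
    obtain ⟨e, he, rfl⟩ := mem_image.mp hp
    obtain ⟨v, -, hv⟩ := mem_image.mp hp'
    simpa [← hv] using card_toFinset_of_mem_edgeSet (hM.1 e he)
  rw [matchingPartition, card_union_of_disjoint hdisj,
    card_image_of_injective _ Sym2.toFinset_injective,
    card_image_of_injective _ singleton_injective, card_sdiff_of_subset (subset_univ _),
    card_univ, hM.card_biUnion_toFinset]
  have := hM.two_mul_card_le
  omega

lemma IsMatchingSet.isColourPartition_compl (hM : IsMatchingSet G M) :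
    IsColourPartition Gᶜ (matchingPartition M) := by
  refine ⟨fun p hp => ?_, fun p hp q hq hpq => ?_, eq_univ_of_forall fun v => ?_,
    fun p hp => forall_mem_not_adj_iff_isIndepSet.mpr ((isIndepSet_compl G).mpr ?_)⟩
  · rcases mem_matchingPartition.mp hp with ⟨e, -, rfl⟩ | ⟨v, -, rfl⟩
    · exact nonempty_iff_ne_empty.mpr (Sym2.toFinset_ne_empty e)
    · exact singleton_nonempty v
  · rcases mem_matchingPartition.mp hp with ⟨e, he, rfl⟩ | ⟨v, hv, rfl⟩ <;>
      rcases mem_matchingPartition.mp hq with ⟨f, hf, rfl⟩ | ⟨w, hw, rfl⟩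
    · exact hM.disjoint_toFinset he hf fun h => hpq (h ▸ rfl)
    · exact disjoint_toFinset_singleton he hw
    · exact (disjoint_toFinset_singleton hf hv).symm
    · exact disjoint_singleton.mpr fun h => hpq (h ▸ rfl)
  · rw [mem_sup]
    by_cases hv : v ∈ M.biUnion Sym2.toFinset
    · obtain ⟨e, he, hve⟩ := mem_biUnion.mp hv
      exact ⟨e.toFinset, mem_matchingPartition.mpr (.inl ⟨e, he, rfl⟩), hve⟩
    · exact ⟨{v}, mem_matchingPartition.mpr (.inr ⟨v, hv, rfl⟩), mem_singleton_self v⟩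
  · rcases mem_matchingPartition.mp hp with ⟨e, he, rfl⟩ | ⟨v, -, rfl⟩
    · exact (isClique_toFinset_iff (G.not_isDiag_of_mem_edgeSet (hM.1 e he))).mpr (hM.1 e he)
    · simp

lemma IsMatchingSet.partitionPairs_matchingPartition (hM : IsMatchingSet G M) :
    partitionPairs (matchingPartition M) = M := by
  ext e
  rw [mem_partitionPairs, mem_matchingPartition]
  constructor
  · rintro ⟨hdiag, ⟨f, hf, hfe⟩ | ⟨v, -, hv⟩⟩
    · exact Sym2.toFinset_injective hfe ▸ hf
    · simpa [← hv] using Sym2.card_toFinset_of_not_isDiag e hdiag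
  · exact fun he => ⟨G.not_isDiag_of_mem_edgeSet (hM.1 e he), .inl ⟨e, he, rfl⟩⟩

lemma IsColourPartition.isMatchingSet_partitionPairs (hF : IsColourPartition Gᶜ F) :
    IsMatchingSet G (partitionPairs F) := by
  refine ⟨fun e he => ?_, fun e he f hf hef v hve hvf => ?_⟩
  · obtain ⟨hdiag, heF⟩ := mem_partitionPairs.mp he
    exact (isClique_toFinset_iff hdiag).mp (hF.isClique_of_compl heF)
  · exact disjoint_left.mp
      (hF.2.1 _ (mem_partitionPairs.mp he).2 _ (mem_partitionPairs.mp hf).2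
        (Sym2.toFinset_injective.ne hef))
      (Sym2.mem_toFinset.mpr hve) (Sym2.mem_toFinset.mpr hvf)

lemma IsColourPartition.card_eq_one_or_two (hG : G.CliqueFree 3) (hF : IsColourPartition Gᶜ F)
    {p : Finset V} (hp : p ∈ F) : p.card = 1 ∨ p.card = 2 := by
  have := (hF.isClique_of_compl hp).card_le_two_of_cliqueFree_three hG
  have := (hF.1 p hp).card_pos
  omega

lemma IsColourPartition.singleton_mem_iff (hG : G.CliqueFree 3) (hF : IsColourPartition Gᶜ F)
    {v : V} : {v} ∈ F ↔ v ∉ (partitionPairs F).biUnion Sym2.toFinset := by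
  constructor
  · intro hv hcov
    obtain ⟨e, he, hve⟩ := mem_biUnion.mp hcov
    obtain ⟨hdiag, heF⟩ := mem_partitionPairs.mp he
    have hne : e.toFinset ≠ {v} := fun h => by
      simpa [h] using Sym2.card_toFinset_of_not_isDiag e hdiag
    exact disjoint_left.mp (hF.2.1 _ heF _ hv hne) hve (mem_singleton_self v)
  · intro hv
    obtain ⟨p, hp, hvp⟩ := hF.exists_mem v
    rcases hF.card_eq_one_or_two hG hp with h1 | h2
    · obtain ⟨w, rfl⟩ := card_eq_one.mp h1
      rwa [mem_singleton.mp hvp]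
    · obtain ⟨e, hdiag, rfl⟩ := Sym2.exists_toFinset_eq_of_card_eq_two h2
      exact absurd (mem_biUnion.mpr ⟨e, mem_partitionPairs.mpr ⟨hdiag, hp⟩, hvp⟩) hv

lemma IsColourPartition.matchingPartition_partitionPairs (hG : G.CliqueFree 3)
    (hF : IsColourPartition Gᶜ F) : matchingPartition (partitionPairs F) = F := by
  ext p
  rw [mem_matchingPartition]
  constructor
  · rintro (⟨e, he, rfl⟩ | ⟨v, hv, rfl⟩)
    · exact (mem_partitionPairs.mp he).2
    · exact (hF.singleton_mem_iff hG).mpr hv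
  · intro hp
    rcases hF.card_eq_one_or_two hG hp with h1 | h2
    · obtain ⟨v, rfl⟩ := card_eq_one.mp h1
      exact .inr ⟨v, (hF.singleton_mem_iff hG).mp hp, rfl⟩
    · obtain ⟨e, hdiag, rfl⟩ := Sym2.exists_toFinset_eq_of_card_eq_two h2
      exact .inl ⟨e, mem_partitionPairs.mpr ⟨hdiag, hp⟩, rfl⟩

lemma IsColourPartition.card_partitionPairs (hG : G.CliqueFree 3) (hF : IsColourPartition Gᶜ F) :
    (partitionPairs F).card = Fintype.card V - F.card := by
  have hM := hF.isMatchingSet_partitionPairs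
  have := hM.two_mul_card_le
  have := hM.card_matchingPartition
  rw [hF.matchingPartition_partitionPairs hG] at this
  omega

end ColourPartitions

section Counting

variable {V : Type} [Fintype V] [DecidableEq V] {G : SimpleGraph V}

lemma matchCount_eq_zero_of_lt (G : SimpleGraph V) {i : ℕ} (hi : Fintype.card V < 2 * i) :
    matchCount G i = 0 :=
  Nat.card_eq_zero.mpr <| .inl ⟨fun ⟨_, hcard, hM⟩ => by
    have := IsMatchingSet.two_mul_card_le (G := G) hM
    omega⟩

lemma sigmaCoeff_compl_eq_matchCount (hG : G.CliqueFree 3) {i : ℕ}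
    (hi : i ≤ Fintype.card V) : sigmaCoeff Gᶜ i = matchCount G (Fintype.card V - i) :=
  Nat.card_congr
    { toFun := fun F => ⟨partitionPairs F.1,
        by rw [IsColourPartition.card_partitionPairs hG F.2.2, F.2.1],
        IsColourPartition.isMatchingSet_partitionPairs F.2.2⟩
      invFun := fun M => ⟨matchingPartition M.1, by
        have hM : IsMatchingSet G M.1 := M.2.2
        have := hM.two_mul_card_le
        rw [hM.card_matchingPartition, M.2.1]
        omega, IsMatchingSet.isColourPartition_compl M.2.2⟩
      left_inv := fun F => Subtype.ext (IsColourPartition.matchingPartition_partitionPairs hG F.2.2)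
      right_inv := fun M => Subtype.ext (IsMatchingSet.partitionPairs_matchingPartition M.2.2) }

end Counting

lemma neg_sq_pow_sub {R : Type*} [CommRing R] (x : R) {n j : ℕ} (h : 2 * j ≤ n) :
    (-(x ^ 2)) ^ (n - j) = (-x) ^ n * ((-1) ^ j * x ^ (n - 2 * j)) := by
  obtain ⟨k, rfl⟩ := Nat.exists_eq_add_of_le h
  rw [show 2 * j + k - j = j + k by omega, Nat.add_sub_cancel_left, pow_add (-x), pow_mul, neg_sq]
  ring

/-- If `G` is a triangle-free finite simple graph on `n` vertices, then for every `x`,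
`σ(Ḡ, −x²) = (−x)^n · m(G, x)`. -/
theorem sigma_compl_eq_matchPoly {V : Type} [Fintype V] [DecidableEq V]
    (G : SimpleGraph V) (hG : G.CliqueFree 3) (x : ℝ) :
    sigmaPoly Gᶜ (-(x ^ 2)) = (-x) ^ (Fintype.card V) * matchPoly G x := by
  set n := Fintype.card V
  calc sigmaPoly Gᶜ (-(x ^ 2))
      = ∑ i ∈ range (n + 1), (matchCount G (n - i) : ℝ) * (-(x ^ 2)) ^ i :=
        sum_congr rfl fun i hi => by
          rw [sigmaCoeff_compl_eq_matchCount hG (mem_range_succ_iff.mp hi)]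
    _ = ∑ j ∈ range (n + 1), (matchCount G j : ℝ) * (-(x ^ 2)) ^ (n - j) := by
        rw [← sum_range_reflect]
        refine sum_congr rfl fun i hi => ?_
        rw [Nat.add_sub_cancel, Nat.sub_sub_self (mem_range_succ_iff.mp hi)]
    _ = ∑ j ∈ range (n / 2 + 1), (matchCount G j : ℝ) * (-(x ^ 2)) ^ (n - j) := by
        refine (sum_subset (range_subset_range.mpr (by omega)) fun j _ hj => ?_).symm
        rw [matchCount_eq_zero_of_lt G (by rw [mem_range] at hj; omega), Nat.cast_zero, zero_mul]
    _ = (-x) ^ n * matchPoly G x := by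
        rw [matchPoly, mul_sum]
        refine sum_congr rfl fun j hj => ?_
        rw [neg_sq_pow_sub x (by rw [mem_range] at hj; omega)]
        ring
end

section
/- Fix a positive integer n, and define polynomials P_k by P_0(x) = 1, P_1(x) = x, and P_k(x) = x·P_{k−1}(x) − n·P_{k−2}(x) for k ≥ 2. Then the union over all k ≥ 2 of the sets of real roots of P_k is dense in the interval [−2√n, 2√n]: for every y ∈ [−2√n, 2√n] and ε > 0 there exist k ≥ 2 and a real root r of P_k with |r − y| < ε. -/
/-- The recursively defined polynomials (as real functions)
`P_0(x) = 1`, `P_1(x) = x`, `P_k(x) = x·P_{k−1}(x) − n·P_{k−2}(x)` for `k ≥ 2`. -/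
def recPoly (n : ℕ) : ℕ → ℝ → ℝ
  | 0 => fun _ => 1
  | 1 => fun x => x
  | (k + 2) => fun x => x * recPoly n (k + 1) x - (n : ℝ) * recPoly n k x

lemma recPoly_sin (n : ℕ) (θ : ℝ) :
    ∀ k : ℕ, recPoly n k (2 * Real.sqrt n * Real.cos θ) * Real.sin θ
      = (Real.sqrt n) ^ k * Real.sin (((k : ℝ) + 1) * θ) := by
  intro k
  induction k using Nat.twoStepInduction with
  | zero => simp [recPoly]
  | one =>
    simp only [recPoly, Nat.cast_one, pow_one]
    have h2 : ((1 : ℝ) + 1) * θ = 2 * θ := by ring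
    rw [h2, Real.sin_two_mul]; ring
  | more k ih2 ih1 =>
    have hn : ((n : ℝ)) = (Real.sqrt n) ^ 2 := by
      rw [Real.sq_sqrt (by positivity)]
    have key : Real.sin (((k : ℝ) + 2 + 1) * θ)
        = 2 * Real.cos θ * Real.sin (((k : ℝ) + 1 + 1) * θ) - Real.sin (((k : ℝ) + 1) * θ) := by
      have e1 : ((k : ℝ) + 2 + 1) * θ = ((k : ℝ) + 1 + 1) * θ + θ := by ring
      have e2 : ((k : ℝ) + 1) * θ = ((k : ℝ) + 1 + 1) * θ - θ := by ring
      rw [e1, e2, Real.sin_add, Real.sin_sub]; ring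
    simp only [recPoly]
    push_cast
    rw [sub_mul, mul_assoc, ih1, mul_assoc ((n:ℝ)), ih2]
    push_cast
    linear_combination (- (Real.sqrt n)^(k+2)) * key
      - (Real.sqrt n)^k * Real.sin (((k:ℝ)+1)*θ) * hn

lemma recPoly_root (n : ℕ) (k j : ℕ) (hj1 : 1 ≤ j) (hjk : j ≤ k) :
    recPoly n k (2 * Real.sqrt n * Real.cos ((j : ℝ) * Real.pi / ((k : ℝ) + 1))) = 0 := by
  set θ : ℝ := (j : ℝ) * Real.pi / ((k : ℝ) + 1) with hθ
  have hk1 : (0:ℝ) < (k : ℝ) + 1 := by positivity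
  have hθpos : 0 < θ := by
    apply div_pos _ hk1
    have : (0:ℝ) < (j:ℝ) := by exact_mod_cast hj1
    positivity
  have hθlt : θ < Real.pi := by
    rw [hθ, div_lt_iff₀ hk1]
    have hjlt : (j : ℝ) < (k : ℝ) + 1 := by exact_mod_cast Nat.lt_succ_of_le hjk
    have := Real.pi_pos
    calc (j:ℝ) * Real.pi < ((k:ℝ)+1) * Real.pi := by
          exact mul_lt_mul_of_pos_right hjlt Real.pi_pos
      _ = Real.pi * ((k:ℝ)+1) := by ring
  have hsin : Real.sin θ ≠ 0 := ne_of_gt (Real.sin_pos_of_pos_of_lt_pi hθpos hθlt)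
  have h := recPoly_sin n θ k
  have harg : ((k : ℝ) + 1) * θ = (j : ℝ) * Real.pi := by
    rw [hθ]; field_simp
  rw [harg, Real.sin_nat_mul_pi, mul_zero] at h
  exact (mul_eq_zero.mp h).resolve_right hsin

/-- The union over all `k ≥ 2` of the sets of real roots of `P_k` is dense in
`[−2√n, 2√n]`. -/
theorem recPoly_roots_dense (n : ℕ) (hn : 0 < n) :
    ∀ y ∈ Set.Icc (-(2 * Real.sqrt n)) (2 * Real.sqrt n), ∀ ε : ℝ, 0 < ε →
      ∃ k : ℕ, 2 ≤ k ∧ ∃ r : ℝ, recPoly n k r = 0 ∧ |r - y| < ε := by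
  intro y hy ε hε
  obtain ⟨hy1, hy2⟩ := hy
  set s : ℝ := 2 * Real.sqrt n with hs
  have hspos : 0 < s := by
    have : (0:ℝ) < Real.sqrt n := Real.sqrt_pos.mpr (by exact_mod_cast hn)
    positivity
  set φ : ℝ := Real.arccos (y / s) with hφ
  have hys : -1 ≤ y / s := by
    rw [neg_le, ← neg_div]
    exact (div_le_one hspos).mpr (by linarith)
  have hys2 : y / s ≤ 1 := (div_le_one hspos).mpr hy2
  have hcosφ : Real.cos φ = y / s := Real.cos_arccos hys hys2
  have hφ0 : 0 ≤ φ := Real.arccos_nonneg _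
  have hφπ : φ ≤ Real.pi := Real.arccos_le_pi _
  have hyeq : y = s * Real.cos φ := by
    rw [hcosφ]; field_simp
  -- choose k large
  obtain ⟨N, hN⟩ := exists_nat_gt (s * Real.pi / ε)
  set k : ℕ := N + 2 with hk
  have hk2 : 2 ≤ k := by omega
  have hm : (0:ℝ) < (k : ℝ) + 1 := by positivity
  have hNk : s * Real.pi / ε < (k : ℝ) + 1 := by
    have : (N : ℝ) ≤ (k : ℝ) := by exact_mod_cast Nat.le_add_right N 2
    linarith
  have hsmall : s * Real.pi / ((k:ℝ) + 1) < ε := by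
    rw [div_lt_iff₀ hm]
    calc s * Real.pi = (s * Real.pi / ε) * ε := by field_simp
      _ < ((k:ℝ)+1) * ε := by exact mul_lt_mul_of_pos_right hNk hε
      _ = ε * ((k:ℝ)+1) := by ring
  -- choose j
  set t : ℝ := φ * ((k:ℝ)+1) / Real.pi with ht
  have hπ := Real.pi_pos
  have ht0 : 0 ≤ t := by positivity
  have htm : t ≤ (k:ℝ) + 1 := by
    rw [ht, div_le_iff₀ hπ]
    nlinarith
  set j : ℕ := min k (max 1 ⌊t⌋₊) with hj
  have hj1 : 1 ≤ j := le_min (by omega) (le_max_left _ _)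
  have hjk : j ≤ k := min_le_left _ _
  have hfloor_le : (⌊t⌋₊ : ℝ) ≤ t := Nat.floor_le ht0
  have hlt_floor : t < (⌊t⌋₊ : ℝ) + 1 := Nat.lt_floor_add_one t
  have habs : |(j:ℝ) - t| ≤ 1 := by
    rw [abs_le]
    constructor
    · -- t - 1 ≤ j
      rcases min_cases k (max 1 ⌊t⌋₊) with ⟨h1, h2⟩ | ⟨h1, h2⟩
      · have : (j:ℝ) = (k:ℝ) := by exact_mod_cast congrArg Nat.cast h1
        rw [this]; linarith
      · have hjm : ⌊t⌋₊ ≤ j := by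
          rw [hj]; omega
        have : (⌊t⌋₊:ℝ) ≤ (j:ℝ) := by exact_mod_cast hjm
        linarith
    · -- j ≤ t + 1
      rcases Nat.eq_zero_or_pos ⌊t⌋₊ with h0 | hpos
      · have : j ≤ 1 := by rw [hj]; omega
        have : (j:ℝ) ≤ 1 := by exact_mod_cast this
        linarith
      · have : j ≤ ⌊t⌋₊ := by rw [hj]; omega
        have : (j:ℝ) ≤ (⌊t⌋₊:ℝ) := by exact_mod_cast this
        linarith
  set θ : ℝ := (j : ℝ) * Real.pi / ((k : ℝ) + 1) with hθ
  have hφt : φ = t * Real.pi / ((k:ℝ)+1) := by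
    rw [ht]; field_simp
  have hdiff : |θ - φ| ≤ Real.pi / ((k:ℝ)+1) := by
    have : θ - φ = ((j:ℝ) - t) * (Real.pi / ((k:ℝ)+1)) := by
      rw [hθ, hφt]; ring
    rw [this, abs_mul, abs_of_pos (by positivity : (0:ℝ) < Real.pi / ((k:ℝ)+1))]
    exact mul_le_of_le_one_left (by positivity) habs
  refine ⟨k, hk2, s * Real.cos θ, ?_, ?_⟩
  · exact recPoly_root n k j hj1 hjk
  · have hcos : |Real.cos θ - Real.cos φ| ≤ |θ - φ| := by
      have h1 : |Real.sin ((θ + φ) / 2)| ≤ 1 := Real.abs_sin_le_one _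
      have h2 : |Real.sin ((θ - φ) / 2)| ≤ |(θ - φ) / 2| := Real.abs_sin_le_abs
      have h3 : |(θ - φ) / 2| = |θ - φ| / 2 := by rw [abs_div]; norm_num
      rw [Real.cos_sub_cos, abs_mul, abs_mul, show |(-2:ℝ)| = 2 by norm_num]
      rw [h3] at h2
      nlinarith [abs_nonneg (Real.sin ((θ - φ) / 2)), abs_nonneg (θ - φ)]
    have : |s * Real.cos θ - y| = s * |Real.cos θ - Real.cos φ| := by
      rw [hyeq, ← mul_sub, abs_mul, abs_of_pos hspos]
    rw [this]
    calc s * |Real.cos θ - Real.cos φ| ≤ s * (Real.pi / ((k:ℝ)+1)) := by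
          apply mul_le_mul_of_nonneg_left _ (le_of_lt hspos)
          exact le_trans hcos hdiff
      _ = s * Real.pi / ((k:ℝ)+1) := by ring
      _ < ε := hsmall
end

section
/- The eigenvalues of adjacency matrices of finite trees are dense in ℝ: for every real number y and every ε > 0 there exist a finite tree T (a connected acyclic simple graph) and a real eigenvalue λ of the adjacency matrix of T with |λ − y| < ε. -/
/-!
Let `caterpillar k n` be the path `P_k` with `n` pendant leaves attached to every vertex. If `v`
is an eigenvector of `P_k` for `μ` (e.g. `v i = sin ((i + 1) θ)`, `μ = 2 cos θ`,
`θ = j π / (k + 1)`) and `c - n / c = μ`, then extending `v` by `v i / c` on the leaves at `i`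
gives an eigenvector of the caterpillar for `c`.

Given `y`, put `n = ⌊y²⌋`, so that `|y - n / y| < 1`. The path eigenvalues `2 cos (j π / (k + 1))`
are dense in `[-2, 2]`, so one of them, `μ'`, is close to `y - n / y`. Since `t ↦ t - n / t`
does not shrink distances on either half-line, the solution `c` of `c - n / c = μ'` on the side
of `y` is at least as close to `y`.
-/

open SimpleGraph Matrix Polynomial Real Finset

def parentGraph {V : Type*} (f : V → V) : SimpleGraph V :=
  fromRel fun a b => f a = b

instance {V : Type*} [DecidableEq V] (f : V → V) : DecidableRel (parentGraph f).Adj :=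
  fun a b => decidable_of_iff' (a ≠ b ∧ (f a = b ∨ f b = a)) Iff.rfl

section parentGraph

variable {V : Type*} {f : V → V} {h : V → ℕ} {r : V}

theorem parentGraph_reachable (hf : ∀ v, v ≠ r → h (f v) < h v) (v : V) :
    (parentGraph f).Reachable v r := by
  induction v using (measure h).wf.induction with
  | h v ih =>
    by_cases hv : v = r
    · exact hv ▸ Reachable.refl v
    · have hlt := hf v hv
      have hadj : (parentGraph f).Adj v (f v) := ⟨fun hvf => hlt.ne (hvf ▸ rfl), Or.inl rfl⟩
      exact hadj.reachable.trans (ih (f v) hlt)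

theorem parent_eq_of_adj_of_le (hr : f r = r) (hf : ∀ v, v ≠ r → h (f v) < h v) {u a : V}
    (hadj : (parentGraph f).Adj u a) (hle : h a ≤ h u) : f u = a := by
  simp only [parentGraph, fromRel_adj] at hadj
  obtain ⟨hne, hua | hau⟩ := hadj
  · exact hua
  · have ha : a ≠ r := fun har => hne (by rw [← hau, har, hr])
    exact absurd (hau ▸ hf a ha) (not_lt.2 hle)

theorem parentGraph_isAcyclic (hr : f r = r) (hf : ∀ v, v ≠ r → h (f v) < h v) :
    (parentGraph f).IsAcyclic := by
  classical
  -- At a vertex of maximal height on a cycle, both cycle neighbours have to be its parent.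
  intro v c hc
  obtain ⟨u, hu, hmax⟩ := c.support.toFinset.exists_max_image h ⟨v, by simp⟩
  rw [List.mem_toFinset] at hu
  set c' := c.rotate u hu
  have hc' : c'.IsCycle := (Walk.isCycle_rotate hu).2 hc
  have hle : ∀ w ∈ c'.support, h w ≤ h u := fun w hw =>
    hmax w (List.mem_toFinset.2 ((Walk.mem_support_rotate_iff c u hu).1 hw))
  have hnil : ¬ c'.Nil := hc'.not_nil
  apply hc'.snd_ne_penultimate
  rw [← parent_eq_of_adj_of_le hr hf (c'.adj_snd hnil) (hle _ (c'.getVert_mem_support 1)),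
    parent_eq_of_adj_of_le hr hf (c'.adj_penultimate hnil).symm
      (hle _ (c'.getVert_mem_support _))]

theorem parentGraph_isTree (hr : f r = r) (hf : ∀ v, v ≠ r → h (f v) < h v) :
    (parentGraph f).IsTree :=
  have : Nonempty V := ⟨r⟩
  ⟨⟨fun a b => (parentGraph_reachable hf a).trans (parentGraph_reachable hf b).symm⟩,
    parentGraph_isAcyclic hr hf⟩

end parentGraph

theorem Matrix.isRoot_charpoly_of_mulVec_eq_smul {n K : Type*} [Fintype n] [DecidableEq n]
    [Field K] {M : Matrix n n K} {w : n → K} {c : K} (hw : w ≠ 0) (h : M *ᵥ w = c • w) :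
    M.charpoly.IsRoot c := by
  rw [IsRoot.def, Matrix.eval_charpoly, ← Matrix.exists_mulVec_eq_zero_iff]
  exact ⟨w, hw, by ext i; simp [sub_mulVec, h, scalar_apply]⟩

theorem exists_fin_isTree_isRoot_charpoly {V R : Type*} [Fintype V] [DecidableEq V] [CommRing R]
    {G : SimpleGraph V} [DecidableRel G.Adj] (hG : G.IsTree) {c : R}
    (hc : (G.adjMatrix R).charpoly.IsRoot c) :
    ∃ (m : ℕ) (T : SimpleGraph (Fin m)) (_ : DecidableRel T.Adj),
      T.IsTree ∧ (T.adjMatrix R).charpoly.IsRoot c := by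
  let e := (Fintype.equivFin V).symm
  refine ⟨_, G.comap e, inferInstance, (Iso.comap e G).isTree_iff.2 hG, ?_⟩
  have : (G.comap e).adjMatrix R = reindex e.symm e.symm (G.adjMatrix R) := by
    ext a b; simp [adjMatrix_apply]
  rwa [this, charpoly_reindex]

instance (k : ℕ) : DecidableRel (pathGraph k).Adj := fun _ _ => decidable_of_iff' _ pathGraph_adj

theorem sum_fin_ite_eq_sin (k : ℕ) {θ : ℝ} (hθ : sin ((k + 1) * θ) = 0) (m : ℤ) (h1 : -1 ≤ m)
    (h2 : m ≤ k) :
    ∑ u : Fin k, (if (u : ℤ) = m then sin (((u : ℕ) + 1) * θ) else 0) = sin ((m + 1) * θ) := by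
  rw [Fin.sum_univ_eq_sum_range (fun u : ℕ => if (u : ℤ) = m then sin ((u + 1) * θ) else 0)]
  obtain rfl | rfl | ⟨h0, hk⟩ : m = -1 ∨ m = k ∨ (0 ≤ m ∧ m < k) := by omega
  · rw [sum_eq_zero fun u _ => if_neg (by omega)]
    simp
  · rw [sum_eq_zero fun u hu => if_neg (by have := mem_range.1 hu; omega)]
    simpa using hθ.symm
  · lift m to ℕ using h0
    simp_all

theorem pathGraph_adjMatrix_mulVec_sin (k : ℕ) {θ : ℝ} (hθ : sin ((k + 1) * θ) = 0) :
    (pathGraph k).adjMatrix ℝ *ᵥ (fun i : Fin k => sin (((i : ℕ) + 1) * θ)) =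
      (2 * cos θ) • fun i : Fin k => sin (((i : ℕ) + 1) * θ) := by
  ext i
  have hadj : ∀ u : Fin k, (pathGraph k).Adj i u ↔ (u : ℤ) = i - 1 ∨ (u : ℤ) = i + 1 := by
    intro u; rw [pathGraph_adj]; omega
  have hsplit : ∀ u : Fin k, (if (pathGraph k).Adj i u then sin (((u : ℕ) + 1) * θ) else 0) =
      (if (u : ℤ) = i - 1 then sin (((u : ℕ) + 1) * θ) else 0) +
        (if (u : ℤ) = i + 1 then sin (((u : ℕ) + 1) * θ) else 0) := by
    intro u; simp only [hadj]; split_ifs <;> first | omega | simp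
  simp only [mulVec, dotProduct, adjMatrix_apply, ite_mul, one_mul, zero_mul, hsplit,
    sum_add_distrib]
  rw [sum_fin_ite_eq_sin k hθ _ (by omega) (by omega),
    sum_fin_ite_eq_sin k hθ _ (by omega) (by omega)]
  push_cast
  simp only [Pi.smul_apply, smul_eq_mul]
  have e1 : ((i : ℝ) - 1 + 1) * θ = ((i : ℝ) + 1) * θ - θ := by ring
  have e2 : ((i : ℝ) + 1 + 1) * θ = ((i : ℝ) + 1) * θ + θ := by ring
  rw [e1, e2, sin_sub, sin_add]
  ring

-- The subtraction `i - 1` truncates, so `(0, none)` is its own parent: the root.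
def caterpillarParent (k n : ℕ) : Fin k × Option (Fin n) → Fin k × Option (Fin n)
  | (i, some _) => (i, none)
  | (i, none) => (⟨i - 1, by omega⟩, none)

def caterpillar (k n : ℕ) : SimpleGraph (Fin k × Option (Fin n)) :=
  parentGraph (caterpillarParent k n)

instance (k n : ℕ) : DecidableRel (caterpillar k n).Adj :=
  inferInstanceAs (DecidableRel (parentGraph _).Adj)

section caterpillar

variable {k n : ℕ}

@[simp]
theorem caterpillar_adj_none_none {i x : Fin k} :
    (caterpillar k n).Adj (i, none) (x, none) ↔ (pathGraph k).Adj i x := by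
  simp only [caterpillar, parentGraph, caterpillarParent, fromRel_adj, ne_eq, Prod.mk.injEq,
    Fin.ext_iff, and_true, pathGraph_adj]
  omega

@[simp]
theorem caterpillar_adj_none_some {i x : Fin k} {t : Fin n} :
    (caterpillar k n).Adj (i, none) (x, some t) ↔ x = i := by
  simp [caterpillar, parentGraph, caterpillarParent, eq_comm]

@[simp]
theorem caterpillar_adj_some {i : Fin k} {s : Fin n} {b : Fin k × Option (Fin n)} :
    (caterpillar k n).Adj (i, some s) b ↔ b = (i, none) := by
  obtain ⟨x, _ | t⟩ := b <;> simp [caterpillar, parentGraph, caterpillarParent, eq_comm]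

theorem caterpillar_isTree (hk : 0 < k) : (caterpillar k n).IsTree := by
  refine parentGraph_isTree (r := (⟨0, hk⟩, none))
    (h := fun | (i, none) => 2 * i | (i, some _) => 2 * i + 1) (by simp [caterpillarParent]) ?_
  rintro ⟨i, _ | s⟩ hv
  · have hi : (i : ℕ) ≠ 0 := fun hi => hv (by simp [Fin.ext_iff, hi])
    change 2 * ((i : ℕ) - 1) < 2 * i
    omega
  · simp [caterpillarParent]

end caterpillar

noncomputable def caterpillarExtend {k : ℕ} (n : ℕ) (c : ℝ) (v : Fin k → ℝ) :
    Fin k × Option (Fin n) → ℝ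
  | (i, none) => v i
  | (i, some _) => v i / c

theorem caterpillar_adjMatrix_mulVec {k n : ℕ} {v : Fin k → ℝ} {μ c : ℝ}
    (hv : (pathGraph k).adjMatrix ℝ *ᵥ v = μ • v) (hc : c - n / c = μ) (hc0 : c ≠ 0 ∨ n = 0) :
    (caterpillar k n).adjMatrix ℝ *ᵥ caterpillarExtend n c v = c • caterpillarExtend n c v := by
  ext ⟨i, _ | s⟩
  · calc ((caterpillar k n).adjMatrix ℝ *ᵥ caterpillarExtend n c v) (i, none)
        = ((pathGraph k).adjMatrix ℝ *ᵥ v) i + n * (v i / c) := by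
          simp [mulVec, dotProduct, adjMatrix_apply, Fintype.sum_prod_type, Fintype.sum_option,
            sum_add_distrib, caterpillarExtend]
      _ = c * v i := by
          rw [hv, Pi.smul_apply, smul_eq_mul, ← hc]
          ring
  · have hc0 : c ≠ 0 := hc0.resolve_right (Fin.pos s).ne'
    simp [mulVec, dotProduct, adjMatrix_apply, caterpillarExtend, mul_div_cancel₀ _ hc0]

theorem caterpillar_charpoly_isRoot {k n j : ℕ} (hj : 1 ≤ j) (hjk : j ≤ k) {c : ℝ}
    (hc : c - n / c = 2 * cos (j * π / (k + 1))) (hc0 : c ≠ 0 ∨ n = 0) :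
    ((caterpillar k n).adjMatrix ℝ).charpoly.IsRoot c := by
  set θ := j * π / (k + 1)
  have hθ : sin ((k + 1) * θ) = 0 := by
    rw [show (k + 1) * θ = j * π by simp only [θ]; field_simp]
    exact sin_nat_mul_pi j
  have hsin : 0 < sin θ := by
    apply sin_pos_of_pos_of_lt_pi (by positivity)
    rw [div_lt_iff₀ (by positivity)]
    have : (j : ℝ) < k + 1 := by exact_mod_cast Nat.lt_succ_of_le hjk
    nlinarith [pi_pos]
  apply isRoot_charpoly_of_mulVec_eq_smul _
    (caterpillar_adjMatrix_mulVec (pathGraph_adjMatrix_mulVec_sin k hθ) hc hc0)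
  intro h
  exact hsin.ne' (by simpa [caterpillarExtend] using congrFun h (⟨0, by omega⟩, none))

theorem exists_nat_mul_pi_div_near {θ δ : ℝ} (h0 : 0 < θ) (hπ : θ < π) (hδ : 0 < δ) :
    ∃ k j : ℕ, 1 ≤ j ∧ j ≤ k ∧ |j * π / (k + 1) - θ| < δ := by
  obtain ⟨k, hk⟩ := exists_nat_gt (max (θ / (π - θ)) (π / δ))
  have hk1 : θ / (π - θ) < k := (le_max_left _ _).trans_lt hk
  have hk2 : π / δ < k := (le_max_right _ _).trans_lt hk
  rw [div_lt_iff₀ (by linarith)] at hk1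
  rw [div_lt_iff₀ hδ] at hk2
  set x := θ * (k + 1) / π
  have hx0 : 0 < x := by positivity
  have hxk : x ≤ k := by rw [div_le_iff₀ pi_pos]; linarith
  refine ⟨k, ⌈x⌉₊, Nat.one_le_ceil_iff.2 hx0, Nat.ceil_le.2 hxk, ?_⟩
  have hsub : ⌈x⌉₊ * π / (k + 1) - θ = (⌈x⌉₊ - x) * (π / (k + 1)) := by
    simp only [x]; field_simp
  rw [hsub, abs_of_nonneg (mul_nonneg (sub_nonneg.2 (Nat.le_ceil x)) (by positivity))]
  calc (⌈x⌉₊ - x) * (π / (k + 1)) < 1 * (π / (k + 1)) := by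
        gcongr; linarith [Nat.ceil_lt_add_one hx0.le]
    _ < δ := by rw [one_mul, div_lt_iff₀ (by positivity)]; linarith

theorem exists_two_cos_near {μ δ : ℝ} (hμ : |μ| < 2) (hδ : 0 < δ) :
    ∃ k j : ℕ, 1 ≤ j ∧ j ≤ k ∧ |2 * cos (j * π / (k + 1)) - μ| < δ := by
  obtain ⟨h1, h2⟩ := abs_lt.1 hμ
  obtain ⟨k, j, hj, hjk, hnear⟩ := exists_nat_mul_pi_div_near
    ((arccos_pos (x := μ / 2)).2 (by linarith)) ((arccos_lt_pi (x := μ / 2)).2 (by linarith))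
    (half_pos hδ)
  refine ⟨k, j, hj, hjk, ?_⟩
  calc |2 * cos (j * π / (k + 1)) - μ|
      = 2 * |cos (j * π / (k + 1)) - cos (arccos (μ / 2))| := by
        rw [cos_arccos (by linarith) (by linarith), ← abs_two, ← abs_mul, abs_two]; ring_nf
    _ ≤ 2 * |j * π / (k + 1) - arccos (μ / 2)| :=
        mul_le_mul_of_nonneg_left (abs_cos_sub_cos_le _ _) zero_le_two
    _ < δ := by linarith

theorem abs_sub_floor_sq_div_lt_one (y : ℝ) : |y - ⌊y ^ 2⌋₊ / y| < 1 := by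
  rcases lt_or_ge (y ^ 2) 1 with hy | hy
  · simpa [Nat.floor_eq_zero.2 hy] using (sq_lt_one_iff_abs_lt_one y).1 hy
  · have hy1 : 1 ≤ |y| := (one_le_sq_iff_one_le_abs y).1 hy
    have hy0 : y ≠ 0 := abs_pos.1 (by linarith)
    have hfloor := Nat.floor_le (sq_nonneg y)
    rw [show y - ⌊y ^ 2⌋₊ / y = (y ^ 2 - ⌊y ^ 2⌋₊) / y by field_simp, abs_div,
      abs_of_nonneg (sub_nonneg.2 hfloor), div_lt_one (by linarith)]
    linarith [Nat.lt_floor_add_one (y ^ 2)]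

theorem abs_sub_le_abs_sub_div_sub_sub_div {a c y : ℝ} (ha : 0 ≤ a) (hc : 0 < c) (hy : 0 < y) :
    |c - y| ≤ |(c - a / c) - (y - a / y)| := by
  have hfactor : (c - a / c) - (y - a / y) = (c - y) * (1 + a / (c * y)) := by
    field_simp; ring
  rw [hfactor, abs_mul, abs_of_pos (by positivity : 0 < 1 + a / (c * y))]
  exact le_mul_of_one_le_right (abs_nonneg _) (le_add_of_nonneg_right (by positivity))

theorem exists_sub_div_eq_near (n : ℕ) {y : ℝ} (hy : y ≠ 0 ∨ n = 0) (μ : ℝ) :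
    ∃ c : ℝ, (c ≠ 0 ∨ n = 0) ∧ c - n / c = μ ∧ |c - y| ≤ |μ - (y - n / y)| := by
  rcases Nat.eq_zero_or_pos n with rfl | hn
  · exact ⟨μ, Or.inr rfl, by simp, by simp [abs_sub_comm]⟩
  replace hy : y ≠ 0 := hy.resolve_right hn.ne'
  wlog hy0 : 0 < y generalizing y μ
  · obtain ⟨c, hc0, hc, hcy⟩ :=
      this (-μ) (neg_ne_zero.2 hy) (neg_pos.2 ((not_lt.1 hy0).lt_of_ne hy))
    refine ⟨-c, by simpa using hc0, ?_, ?_⟩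
    · rw [div_neg, sub_neg_eq_add]
      linarith
    · convert hcy using 1 <;> rw [← abs_neg] <;> congr 1 <;> ring
  set D := √(μ ^ 2 + 4 * n)
  have hD : D ^ 2 = μ ^ 2 + 4 * n := sq_sqrt (by positivity)
  have hμD : |μ| < D := by
    rw [lt_sqrt (abs_nonneg μ), sq_abs]
    have : (0 : ℝ) < n := by exact_mod_cast hn
    linarith
  set c := (μ + D) / 2
  have hc : 0 < c := by change 0 < (μ + D) / 2; linarith [neg_abs_le μ]
  have hroot : c - n / c = μ := by
    rw [show (n : ℝ) / c = c - μ by rw [div_eq_iff hc.ne']; linear_combination -hD / 4]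
    ring
  refine ⟨c, Or.inl hc.ne', hroot, ?_⟩
  simpa only [hroot] using abs_sub_le_abs_sub_div_sub_sub_div (Nat.cast_nonneg n) hc hy0

/-- The eigenvalues of adjacency matrices of finite trees are dense in ℝ: for every
real `y` and `ε > 0` there exist a finite tree `T` and a real root `lam` of the
characteristic polynomial `det(xI − A(T))` of its adjacency matrix with `|lam − y| < ε`. -/
theorem tree_eigenvalues_dense (y ε : ℝ) (hε : 0 < ε) :
    ∃ (m : ℕ) (T : SimpleGraph (Fin m)) (_ : DecidableRel T.Adj) (lam : ℝ),
      T.IsTree ∧ (T.adjMatrix ℝ).charpoly.IsRoot lam ∧ |lam - y| < ε := by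
  set n := ⌊y ^ 2⌋₊
  obtain ⟨k, j, hj, hjk, hnear⟩ :=
    exists_two_cos_near ((abs_sub_floor_sq_div_lt_one y).trans one_lt_two) hε
  have hy : y ≠ 0 ∨ n = 0 := or_iff_not_imp_left.2 fun h => by simp [n, not_not.1 h]
  obtain ⟨c, hc0, hc, hcy⟩ := exists_sub_div_eq_near n hy (2 * cos (j * π / (k + 1)))
  obtain ⟨m, T, hdec, htree, hroot⟩ := exists_fin_isTree_isRoot_charpoly
    (caterpillar_isTree (n := n) (by omega)) (caterpillar_charpoly_isRoot hj hjk hc hc0)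
  exact ⟨m, T, hdec, c, htree, hroot, hcy.trans_lt hnear⟩
end

section
/- For every finite simple graph G on n vertices and every natural number k, the number of proper colourings of G using colours from a set of size k equals Σ_{i=0}^{n} a_i(G) · k(k−1)⋯(k−i+1), where k(k−1)⋯(k−i+1) is the falling factorial. -/
open Finset

noncomputable def Function.Surjective.embeddingEquivFibresEq {α ι β : Type*} {π : α → ι}
    (hπ : π.Surjective) :
    (ι ↪ β) ≃ {f : α → β // ∀ a b, f a = f b ↔ π a = π b} where
  toFun e := ⟨e ∘ π, fun _ _ => e.injective.eq_iff⟩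
  invFun f := ⟨f.1 ∘ Function.surjInv hπ, fun i j hij => by
    simpa only [Function.surjInv_eq] using (f.2 _ _).1 hij⟩
  left_inv e := by ext i; exact congrArg e (Function.surjInv_eq hπ i)
  right_inv f := by ext a; exact (f.2 _ _).2 (Function.surjInv_eq hπ _)

namespace Finpartition

section

variable {V : Type*} [DecidableEq V] {s : Finset V}

theorem parts_eq_image_part (P : Finpartition s) : P.parts = s.image P.part := by
  ext p
  refine ⟨fun hp => ?_, fun hp => ?_⟩
  · obtain ⟨a, ha, rfl⟩ := P.part_surjOn hp
    exact mem_image_of_mem _ ha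
  · obtain ⟨a, ha, rfl⟩ := mem_image.1 hp
    exact P.part_mem.2 ha

theorem ext_part {P Q : Finpartition s} (h : ∀ a ∈ s, P.part a = Q.part a) : P = Q := by
  ext1
  rw [parts_eq_image_part, parts_eq_image_part]
  exact image_congr h

end

variable {V β : Type*} [Fintype V] [DecidableEq V] [DecidableEq β]

def ker (f : V → β) : Finpartition (univ : Finset V) := ofSetoid (Setoid.ker f)

theorem mem_part_ker {f : V → β} {a b : V} : b ∈ (ker f).part a ↔ f a = f b :=
  mem_part_ofSetoid_iff_rel

theorem ker_eq_iff {f : V → β} {P : Finpartition (univ : Finset V)} :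
    ker f = P ↔ ∀ a b, f a = f b ↔ P.part a = P.part b := by
  constructor
  · rintro rfl a b
    rw [← mem_part_ker, (ker f).mem_part_iff_part_eq_part (mem_univ _) (mem_univ _), eq_comm]
  · intro h
    refine ext_part fun a _ => ?_
    ext b
    rw [mem_part_ker, h, P.mem_part_iff_part_eq_part (mem_univ _) (mem_univ _), eq_comm]

theorem card_ker_eq [Fintype β] (P : Finpartition (univ : Finset V)) :
    Fintype.card {f : V → β // ker f = P} = (Fintype.card β).descFactorial #P.parts := by
  let π : V → P.parts := fun a => ⟨P.part a, P.part_mem.2 (mem_univ a)⟩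
  have hπ : π.Surjective := fun ⟨p, hp⟩ => by
    obtain ⟨a, -, rfl⟩ := P.part_surjOn hp
    exact ⟨a, rfl⟩
  rw [← Fintype.card_coe P.parts, ← Fintype.card_embedding_eq,
    Fintype.card_congr hπ.embeddingEquivFibresEq]
  simp only [ker_eq_iff, π, Subtype.mk.injEq]

end Finpartition

namespace SimpleGraph

variable {V : Type*} {G : SimpleGraph V}

theorem isIndepSet_iff_forall_not_adj {s : Set V} :
    G.IsIndepSet s ↔ ∀ u ∈ s, ∀ v ∈ s, ¬G.Adj u v :=
  ⟨fun h _ hu _ hv huv => h hu hv huv.ne huv, fun h u hu v hv _ => h u hu v hv⟩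

variable [Fintype V] [DecidableEq V]

variable (G) in
def colourPartitions [DecidableRel G.Adj] : Finset (Finpartition (univ : Finset V)) :=
  {P | ∀ p ∈ P.parts, G.IsIndepSet p}

variable [DecidableRel G.Adj]

theorem mem_colourPartitions {P : Finpartition (univ : Finset V)} :
    P ∈ G.colourPartitions ↔ ∀ p ∈ P.parts, ∀ u ∈ p, ∀ v ∈ p, ¬G.Adj u v := by
  simp only [colourPartitions, mem_filter, mem_univ, true_and, isIndepSet_iff_forall_not_adj,
    mem_coe]

theorem ker_mem_colourPartitions_iff {β : Type*} [DecidableEq β] {f : V → β} :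
    Finpartition.ker f ∈ G.colourPartitions ↔ ∀ u v, G.Adj u v → f u ≠ f v := by
  rw [mem_colourPartitions]
  constructor
  · intro h u v huv hf
    exact h _ ((Finpartition.ker f).part_mem.2 (mem_univ u))
      u (Finpartition.mem_part_ker.2 rfl) v (Finpartition.mem_part_ker.2 hf) huv
  · intro h p hp u hu v hv huv
    obtain ⟨a, -, rfl⟩ := (Finpartition.ker f).part_surjOn hp
    exact h u v huv ((Finpartition.mem_part_ker.1 hu).symm.trans (Finpartition.mem_part_ker.1 hv))

theorem card_proper_eq_sum_colourPartitions (β : Type*) [Fintype β] [DecidableEq β] :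
    Nat.card {f : V → β // ∀ u v, G.Adj u v → f u ≠ f v} =
      ∑ P ∈ G.colourPartitions, (Fintype.card β).descFactorial #P.parts := by
  classical
  rw [Nat.card_eq_fintype_card, Fintype.card_subtype, card_eq_sum_card_fiberwise
    (f := Finpartition.ker) fun f hf => ker_mem_colourPartitions_iff.2 (mem_filter.1 hf).2]
  refine sum_congr rfl fun P hP => ?_
  rw [← Finpartition.card_ker_eq, Fintype.card_subtype, filter_filter]
  congr 1
  ext f
  simp only [mem_filter, mem_univ, true_and, and_iff_right_iff_imp]
  rintro rfl
  exact ker_mem_colourPartitions_iff.1 hP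

end SimpleGraph

theorem sigmaCoeff_eq_card_colourPartitions {V : Type} [Fintype V] [DecidableEq V]
    (G : SimpleGraph V) [DecidableRel G.Adj] (i : ℕ) :
    sigmaCoeff G i = #{P ∈ G.colourPartitions | #P.parts = i} := by
  have hmem (P : Finpartition (univ : Finset V)) :
      P ∈ {P ∈ G.colourPartitions | #P.parts = i} ↔
        #P.parts = i ∧ ∀ p ∈ P.parts, ∀ u ∈ p, ∀ v ∈ p, ¬G.Adj u v := by
    rw [mem_filter, SimpleGraph.mem_colourPartitions, and_comm]
  rw [sigmaCoeff, ← Fintype.card_coe, ← Nat.card_eq_fintype_card]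
  refine Nat.card_congr
    { toFun := fun F => ⟨⟨F.1, supIndep_iff_pairwiseDisjoint.2 F.2.2.2.1,
        F.2.2.2.2.1, fun h => (F.2.2.1 ⊥ h).ne_empty rfl⟩, (hmem _).2 ⟨F.2.1, F.2.2.2.2.2⟩⟩
      invFun := fun P =>
        have hP := (hmem _).1 P.2
        ⟨P.1.parts, hP.1, fun _ => P.1.nonempty_of_mem_parts,
          fun _ hp _ hq => P.1.disjoint hp hq, P.1.sup_parts, hP.2⟩
      left_inv := fun _ => rfl
      right_inv := fun _ => rfl }

/-- For every finite simple graph `G` on `n` vertices and every natural `k`, the number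
of proper colourings of `G` with colours from a set of size `k` equals
`Σ_{i=0}^{n} a_i(G) · k(k−1)⋯(k−i+1)`, where `k(k−1)⋯(k−i+1)` is the falling
factorial. -/
theorem chromatic_eq_sum_sigmaCoeff_descFactorial
    {V : Type} [Fintype V] [DecidableEq V] (G : SimpleGraph V) (k : ℕ) :
    Nat.card {f : V → Fin k // ∀ u v : V, G.Adj u v → f u ≠ f v} =
      ∑ i ∈ Finset.range (Fintype.card V + 1),
        sigmaCoeff G i * Nat.descFactorial k i := by
  classical
  rw [G.card_proper_eq_sum_colourPartitions, Fintype.card_fin,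
    ← sum_fiberwise_of_maps_to (g := fun P => #P.parts) (t := range (Fintype.card V + 1))
      fun P _ => mem_range_succ_iff.2 P.card_parts_le_card]
  refine sum_congr rfl fun i _ => ?_
  rw [sigmaCoeff_eq_card_colourPartitions, sum_congr rfl fun P hP => by rw [(mem_filter.1 hP).2],
    sum_const, smul_eq_mul]
end
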